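/- arXiv:1607.05816 — 4 statements merged into one kernel-verified Lean document; each statement's English description precedes it below -/
import Mathlib

section
/- Let X, Y be finite sets, let J be a convex lower semicontinuous function on nonnegative matrices R ∈ ℝ_{≥0}^{X×Y}, let H(R) = Σ_{ij} R_{ij}(log R_{ij} − 1) be minus the entropy, and suppose A := argmin J is nonempty. If (ε_k) is a sequence of positive reals converging to 0, then for each k the minimizer R_k of J + ε_k H exists and is unique, and the sequence (R_k) converges to the unique element of A of minimal entropy, i.e., to argmin_{R ∈ A} H(R). -/
/-!
On the nonnegative orthant, `H` is continuous, strictly convex and coercive, since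
`x ≤ x (log x - 1) + e`. Hence `J + ε H` (for `ε > 0`) and `H` restricted to `argmin J` have
compact sublevel sets, so they attain their minima, uniquely by strict convexity. Comparing the
minimiser `R_k` of `J + ε_k H` with the minimal-entropy minimiser `R*` of `J` gives
`H(R_k) ≤ H(R*)` and `J(R_k) ≤ min J + ε_k (H(R*) - inf H)`. So the `R_k` stay in a compact
sublevel set of `H`, and by lower semicontinuity of `J` each of their cluster points is a
minimiser of `J` with entropy at most `H(R*)`, that is, `R*` itself.
-/

open Filter Finset Topology

/-- Minus the entropy of a nonnegative matrix, `H(R) = Σ R_{ij}(log R_{ij} − 1)`. -/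
noncomputable def negEntropy {X Y : Type*} [Fintype X] [Fintype Y]
    (R : X → Y → ℝ) : ℝ :=
  ∑ i : X, ∑ j : Y, R i j * (Real.log (R i j) - 1)

theorem StrictConvexOn.sum_comp_pi {𝕜 E β ι : Type*} [Semiring 𝕜] [PartialOrder 𝕜]
    [AddCommMonoid E] [Module 𝕜 E] [AddCommMonoid β] [PartialOrder β] [IsOrderedCancelAddMonoid β]
    [Module 𝕜 β] [Fintype ι] {s : Set E} {f : E → β} (hf : StrictConvexOn 𝕜 s f) :
    StrictConvexOn 𝕜 (Set.univ.pi fun _ : ι => s) fun x => ∑ i, f (x i) := by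
  refine ⟨convex_pi fun _ _ => hf.1, fun x hx y hy hxy a b ha hb hab => ?_⟩
  obtain ⟨i, hi⟩ := Function.ne_iff.mp hxy
  simp only [Pi.add_apply, Pi.smul_apply, Finset.smul_sum, ← Finset.sum_add_distrib]
  exact Finset.sum_lt_sum
    (fun j _ => hf.convexOn.2 (hx j trivial) (hy j trivial) ha.le hb.le hab)
    ⟨i, Finset.mem_univ i, hf.2 (hx i trivial) (hy i trivial) hi ha hb hab⟩

theorem StrictConvexOn.const_mul {E : Type*} [AddCommMonoid E] [Module ℝ E] {s : Set E}
    {f : E → ℝ} (hf : StrictConvexOn ℝ s f) {c : ℝ} (hc : 0 < c) :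
    StrictConvexOn ℝ s fun x => c * f x :=
  ⟨hf.1, fun x hx y hy hxy a b ha hb hab => by
    calc c * f (a • x + b • y) < c * (a • f x + b • f y) :=
          mul_lt_mul_of_pos_left (hf.2 hx hy hxy ha hb hab) hc
      _ = a • (c * f x) + b • (c * f y) := by simp only [smul_eq_mul]; ring⟩

theorem setOf_isMinOn_eq_inter_preimage_Iic {α β : Type*} [Preorder β] {s : Set α} {f : α → β}
    {x₀ : α} (hx₀s : x₀ ∈ s) (hx₀ : IsMinOn f s x₀) :
    {x ∈ s | IsMinOn f s x} = s ∩ f ⁻¹' Set.Iic (f x₀) := by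
  ext x
  constructor
  · rintro ⟨hxs, hx⟩
    exact ⟨hxs, hx hx₀s⟩
  · rintro ⟨hxs, hx⟩
    exact ⟨hxs, isMinOn_iff.mpr fun y hy => hx.trans (isMinOn_iff.mp hx₀ y hy)⟩

theorem ConvexOn.convex_setOf_isMinOn {E : Type*} [AddCommMonoid E] [Module ℝ E] {s : Set E}
    {f : E → ℝ} (hf : ConvexOn ℝ s f) : Convex ℝ {x ∈ s | IsMinOn f s x} := fun x hx => by
  rw [setOf_isMinOn_eq_inter_preimage_Iic hx.1 hx.2]
  exact hf.convex_le (f x) ⟨hx.1, le_refl (f x)⟩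

section Regularization

variable {α : Type*} [TopologicalSpace α] {s : Set α} {J H : α → ℝ} {x₀ : α}

theorem LowerSemicontinuousOn.isClosed_inter_preimage_Iic {γ : Type*} [LinearOrder γ]
    {f : α → γ} (hf : LowerSemicontinuousOn f s) (hs : IsClosed s) (c : γ) :
    IsClosed (s ∩ f ⁻¹' Set.Iic c) := by
  obtain ⟨v, hv, hsv⟩ := lowerSemicontinuousOn_iff_preimage_Iic.mp hf c
  exact hsv ▸ hs.inter hv

theorem LowerSemicontinuousOn.exists_isMinOn_of_isCompact_inter_preimage_Iic {γ : Type*}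
    [LinearOrder γ] {f : α → γ} (hf : LowerSemicontinuousOn f s) (hx₀ : x₀ ∈ s)
    (hK : IsCompact (s ∩ f ⁻¹' Set.Iic (f x₀))) : ∃ x ∈ s, IsMinOn f s x := by
  have hfK : LowerSemicontinuousOn f (s ∩ f ⁻¹' Set.Iic (f x₀)) := hf.mono Set.inter_subset_left
  have hne : (s ∩ f ⁻¹' Set.Iic (f x₀)).Nonempty := ⟨x₀, hx₀, le_refl (f x₀)⟩
  obtain ⟨x, ⟨hxs, -⟩, hx⟩ := hfK.exists_isMinOn hne hK
  refine ⟨x, hxs, fun y hy => ?_⟩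
  rcases le_total (f y) (f x₀) with h | h
  · exact isMinOn_iff.mp hx y ⟨hy, h⟩
  · exact (isMinOn_iff.mp hx x₀ ⟨hx₀, le_refl (f x₀)⟩).trans h

theorem exists_isMinOn_add_mul (hs : IsClosed s) (hJ : LowerSemicontinuousOn J s)
    (hH : ContinuousOn H s) (hx₀s : x₀ ∈ s) (hx₀ : IsMinOn J s x₀)
    (hK : IsCompact (s ∩ H ⁻¹' Set.Iic (H x₀))) {ε : ℝ} (hε : 0 < ε) :
    ∃ x ∈ s, IsMinOn (fun y => J y + ε * H y) s x := by
  have hF : LowerSemicontinuousOn (fun y => J y + ε * H y) s :=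
    hJ.add (continuousOn_const.mul hH).lowerSemicontinuousOn
  refine hF.exists_isMinOn_of_isCompact_inter_preimage_Iic hx₀s
    (hK.of_isClosed_subset (hF.isClosed_inter_preimage_Iic hs _) ?_)
  rintro y ⟨hys, hy⟩
  have hy : J y + ε * H y ≤ J x₀ + ε * H x₀ := hy
  have hJy : J x₀ ≤ J y := hx₀ hys
  exact ⟨hys, le_of_mul_le_mul_left (by linarith) hε⟩

theorem exists_isMinOn_setOf_isMinOn (hs : IsClosed s) (hJ : LowerSemicontinuousOn J s)
    (hH : ContinuousOn H s) (hx₀s : x₀ ∈ s) (hx₀ : IsMinOn J s x₀)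
    (hK : IsCompact (s ∩ H ⁻¹' Set.Iic (H x₀))) :
    ∃ x ∈ {y ∈ s | IsMinOn J s y}, IsMinOn H {y ∈ s | IsMinOn J s y} x := by
  rw [setOf_isMinOn_eq_inter_preimage_Iic hx₀s hx₀]
  have hA := hJ.isClosed_inter_preimage_Iic hs (J x₀)
  have hHA : LowerSemicontinuousOn H (s ∩ J ⁻¹' Set.Iic (J x₀)) :=
    (hH.mono Set.inter_subset_left).lowerSemicontinuousOn
  exact hHA.exists_isMinOn_of_isCompact_inter_preimage_Iic ⟨hx₀s, le_refl (J x₀)⟩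
    (hK.of_isClosed_subset (hHA.isClosed_inter_preimage_Iic hA _)
      fun y ⟨⟨hys, _⟩, hy⟩ => ⟨hys, hy⟩)

theorem tendsto_of_isMinOn_add_mul {ι : Type*} {l : Filter ι} {x : ι → α} {ε : ι → ℝ}
    {xstar : α} (hJ : LowerSemicontinuousOn J s) (hH : ContinuousOn H s)
    (hK : IsCompact (s ∩ H ⁻¹' Set.Iic (H xstar))) (hstars : xstar ∈ s) (hstar : IsMinOn J s xstar)
    (huniq : ∀ y ∈ {y ∈ s | IsMinOn J s y}, H y ≤ H xstar → y = xstar)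
    (hε : ∀ i, 0 < ε i) (hεl : Tendsto ε l (𝓝 0))
    (hxs : ∀ i, x i ∈ s) (hx : ∀ i, IsMinOn (fun y => J y + ε i * H y) s (x i)) :
    Tendsto x l (𝓝 xstar) := by
  have hcmp : ∀ i, J (x i) + ε i * H (x i) ≤ J xstar + ε i * H xstar := fun i => hx i hstars
  have hHx : ∀ i, H (x i) ≤ H xstar := fun i => by
    have hJ : J xstar ≤ J (x i) := hstar (hxs i)
    exact le_of_mul_le_mul_left (by linarith [hcmp i]) (hε i)
  obtain ⟨m, hm⟩ := (hH.mono Set.inter_subset_left).lowerSemicontinuousOn.bddBelow_of_isCompact hK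
  have hJx : ∀ i, J (x i) ≤ J xstar + ε i * (H xstar - m) := fun i => by
    have hm : m ≤ H (x i) := hm ⟨x i, ⟨hxs i, hHx i⟩, rfl⟩
    nlinarith [hε i, hcmp i]
  have hJlim : Tendsto (fun i => J xstar + ε i * (H xstar - m)) l (𝓝 (J xstar)) := by
    simpa using tendsto_const_nhds.add (hεl.mul_const (H xstar - m))
  refine hK.tendsto_nhds_of_unique_mapClusterPt (Eventually.of_forall fun i => ⟨hxs i, hHx i⟩)
    fun a ⟨has, haH⟩ ha => huniq a ⟨has, ?_⟩ haH
  suffices J a ≤ J xstar from fun y hy => this.trans (hstar hy)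
  by_contra! hlt
  obtain ⟨c, hc₁, hc₂⟩ := exists_between hlt
  have hnear : ∀ᶠ y in 𝓝 a, y ∈ s → c < J y := eventually_nhdsWithin_iff.mp (hJ a has c hc₂)
  have hlow : ∀ᶠ i in l, J (x i) < c :=
    (hJlim.eventually (gt_mem_nhds hc₁)).mono fun i hi => (hJx i).trans_lt hi
  obtain ⟨i, hi₁, hi₂⟩ := ((ha.frequently hnear).and_eventually hlow).exists
  exact (hi₁ (hxs i)).not_gt hi₂

end Regularization

namespace Real

theorem strictConvexOn_mul_log_sub_one : StrictConvexOn ℝ (Set.Ici 0) fun x => x * (log x - 1) :=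
  (strictConvexOn_mul_log.sub_concaveOn (concaveOn_id (convex_Ici 0))).congr fun x _ => by
    simp only [Pi.sub_apply, id, mul_sub, mul_one]

theorem le_mul_log_sub_one_add_exp_one {x : ℝ} (hx : 0 ≤ x) : x ≤ x * (log x - 1) + exp 1 := by
  rcases hx.eq_or_lt with rfl | hx
  · simp [(exp_pos 1).le]
  -- `log y ≥ 1 - 1 / y` at `y = x / e`
  have h := one_sub_inv_le_log_of_pos (div_pos hx (exp_pos 1))
  rw [log_div hx.ne' (exp_pos 1).ne', log_exp, inv_div] at h
  have : x * (1 - exp 1 / x) = x - exp 1 := by field_simp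
  nlinarith

end Real

theorem isClosed_setOf_nonneg {X Y : Type*} : IsClosed {R : X → Y → ℝ | ∀ i j, 0 ≤ R i j} := by
  simp only [Set.ofPred_forall]
  exact isClosed_iInter fun i => isClosed_iInter fun j => isClosed_le continuous_const (by fun_prop)

section NegEntropy

variable {X Y : Type*} [Fintype X] [Fintype Y]

theorem continuous_negEntropy : Continuous (negEntropy : (X → Y → ℝ) → ℝ) := by
  have h : (negEntropy : (X → Y → ℝ) → ℝ) =
      fun R => ∑ i, ∑ j, (R i j * Real.log (R i j) - R i j) := by
    funext R
    simp only [negEntropy, mul_sub, mul_one]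
  rw [h]
  fun_prop

theorem strictConvexOn_negEntropy :
    StrictConvexOn ℝ {R : X → Y → ℝ | ∀ i j, 0 ≤ R i j} negEntropy := by
  have h := (Real.strictConvexOn_mul_log_sub_one.sum_comp_pi (ι := Y)).sum_comp_pi (ι := X)
  have hC : {R : X → Y → ℝ | ∀ i j, 0 ≤ R i j} =
      Set.univ.pi fun _ => Set.univ.pi fun _ => Set.Ici 0 := by
    ext R
    simp [Pi.le_def]
  rw [hC]
  exact h

theorem sum_sum_le_negEntropy_add {R : X → Y → ℝ} (hR : ∀ i j, 0 ≤ R i j) :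
    ∑ i, ∑ j, R i j ≤ negEntropy R + Fintype.card X * Fintype.card Y * Real.exp 1 := by
  have h : ∑ i, ∑ j, R i j ≤ ∑ i : X, ∑ j : Y, (R i j * (Real.log (R i j) - 1) + Real.exp 1) :=
    Finset.sum_le_sum fun i _ => Finset.sum_le_sum fun j _ =>
      Real.le_mul_log_sub_one_add_exp_one (hR i j)
  simpa [negEntropy, Finset.sum_add_distrib, mul_assoc] using h

theorem isCompact_setOf_nonneg_inter_negEntropy_preimage_Iic (c : ℝ) :
    IsCompact ({R : X → Y → ℝ | ∀ i j, 0 ≤ R i j} ∩ negEntropy ⁻¹' Set.Iic c) := by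
  set B := c + Fintype.card X * Fintype.card Y * Real.exp 1
  have hbox : IsCompact (Set.univ.pi fun _ : X => Set.univ.pi fun _ : Y => Set.Icc 0 B) :=
    isCompact_univ_pi fun _ => isCompact_univ_pi fun _ => isCompact_Icc
  refine hbox.of_isClosed_subset
    (isClosed_setOf_nonneg.inter (isClosed_Iic.preimage continuous_negEntropy)) ?_
  rintro R ⟨hR, hRc⟩ i - j -
  have hRc : negEntropy R ≤ c := hRc
  refine ⟨hR i j, ?_⟩
  calc R i j ≤ ∑ j, R i j := Finset.single_le_sum (fun j _ => hR i j) (Finset.mem_univ j)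
    _ ≤ ∑ i, ∑ j, R i j :=
      Finset.single_le_sum (fun i _ => Finset.sum_nonneg fun j _ => hR i j) (Finset.mem_univ i)
    _ ≤ B := (sum_sum_le_negEntropy_add hR).trans (by linarith)

end NegEntropy

/-- Convergence of the entropic regularization: the minimizers of `J + ε_k H` over the
nonnegative matrices exist, are unique, and converge to the minimal-entropy minimizer
of `J` as `ε_k → 0`. -/
theorem entropic_regularization_convergence {X Y : Type*} [Fintype X] [Fintype Y]
    (J : (X → Y → ℝ) → ℝ)
    (hJconv : ConvexOn ℝ {R : X → Y → ℝ | ∀ i j, 0 ≤ R i j} J)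
    (hJlsc : LowerSemicontinuousOn J {R : X → Y → ℝ | ∀ i j, 0 ≤ R i j})
    (A : Set (X → Y → ℝ))
    (hA : A = {R | (∀ i j, 0 ≤ R i j) ∧
      IsMinOn J {R' : X → Y → ℝ | ∀ i j, 0 ≤ R' i j} R})
    (hAne : A.Nonempty)
    (ε : ℕ → ℝ) (hεpos : ∀ k, 0 < ε k) (hεlim : Tendsto ε atTop (nhds 0)) :
    ∃ (Rseq : ℕ → X → Y → ℝ) (Rstar : X → Y → ℝ),
      (∀ k, (∀ i j, 0 ≤ Rseq k i j) ∧
        IsMinOn (fun R => J R + ε k * negEntropy R)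
          {R : X → Y → ℝ | ∀ i j, 0 ≤ R i j} (Rseq k) ∧
        (∀ R', (∀ i j, 0 ≤ R' i j) →
          IsMinOn (fun R => J R + ε k * negEntropy R)
            {R : X → Y → ℝ | ∀ i j, 0 ≤ R i j} R' → R' = Rseq k)) ∧
      Rstar ∈ A ∧ IsMinOn negEntropy A Rstar ∧
      (∀ R', R' ∈ A → IsMinOn negEntropy A R' → R' = Rstar) ∧
      Tendsto Rseq atTop (nhds Rstar) := by
  obtain ⟨R₀, hR₀s, hR₀⟩ := hA ▸ hAne
  have hH := continuous_negEntropy.continuousOn (s := {R : X → Y → ℝ | ∀ i j, 0 ≤ R i j})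
  have hK := isCompact_setOf_nonneg_inter_negEntropy_preimage_Iic (X := X) (Y := Y)
  choose Rseq hRseqs hRseq using fun k =>
    exists_isMinOn_add_mul isClosed_setOf_nonneg hJlsc hH hR₀s hR₀ (hK _) (hεpos k)
  obtain ⟨Rstar, hRstarA, hRstar⟩ : ∃ R ∈ A, IsMinOn negEntropy A R :=
    hA ▸ exists_isMinOn_setOf_isMinOn isClosed_setOf_nonneg hJlsc hH hR₀s hR₀ (hK _)
  have hHA : StrictConvexOn ℝ A negEntropy :=
    hA ▸ strictConvexOn_negEntropy.subset (fun _ h => h.1) hJconv.convex_setOf_isMinOn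
  have huniq : ∀ R ∈ A, IsMinOn negEntropy A R → R = Rstar := fun R hR hRmin =>
    hHA.eq_of_isMinOn hRmin hRstar hR hRstarA
  refine ⟨Rseq, Rstar, fun k => ⟨hRseqs k, hRseq k, fun R hR hRmin => ?_⟩, hRstarA, hRstar,
    huniq, ?_⟩
  · exact (hJconv.add_strictConvexOn (strictConvexOn_negEntropy.const_mul (hεpos k))).eq_of_isMinOn
      hRmin (hRseq k) hR (hRseqs k)
  · subst hA
    exact tendsto_of_isMinOn_add_mul hJlsc hH (hK _) hRstarA.1 hRstarA.2
      (fun R hR hle => huniq R hR fun R' hR' => hle.trans (hRstar hR')) hεpos hεlim hRseqs hRseq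
end

section
/- Let λ > 0, ε > 0, and p > 0. The unique minimizer over s ≥ 0 of the function s ↦ λ·KL(s|p) + ε·KL(s|z), for fixed z > 0, is s* = z^{ε/(ε+λ)} · p^{λ/(ε+λ)}, where KL(s|q) = s log(s/q) − s + q. -/
/-- Pointwise Kullback-Leibler divergence. -/
noncomputable def klPt (s z : ℝ) : ℝ := s * Real.log (s / z) - s + z

/-!
For `m` the weighted geometric mean of `p` and `z`, i.e. `(λ + ε) log m = λ log p + ε log z`,
the logarithmic terms of `λ·KL(s|p) + ε·KL(s|z)` recombine into a single divergence:
`λ·KL(s|p) + ε·KL(s|z) = (λ + ε)·KL(s|m) + (λ·KL(m|p) + ε·KL(m|z))`.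
Since `KL(s|m) ≥ 0` with equality exactly at `s = m`, the point `m` is the unique minimizer.
-/

open Real InformationTheory

lemma klPt_eq_mul_klFun (s : ℝ) {q : ℝ} (hq : 0 < q) : klPt s q = q * klFun (s / q) := by
  rw [klPt, klFun_apply]
  field_simp
  ring

lemma klPt_nonneg {s q : ℝ} (hs : 0 ≤ s) (hq : 0 < q) : 0 ≤ klPt s q := by
  rw [klPt_eq_mul_klFun s hq]
  exact mul_nonneg hq.le (klFun_nonneg (div_nonneg hs hq.le))

lemma klPt_eq_zero_iff {s q : ℝ} (hs : 0 ≤ s) (hq : 0 < q) : klPt s q = 0 ↔ s = q := by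
  rw [klPt_eq_mul_klFun s hq, mul_eq_zero, klFun_eq_zero_iff (div_nonneg hs hq.le),
    div_eq_one_iff_eq hq.ne']
  simp [hq.ne']

lemma mul_log_rpow_mul_rpow {a b p q : ℝ} (hab : 0 < a + b) (hp : 0 < p) (hq : 0 < q) :
    (a + b) * log (p ^ (a / (a + b)) * q ^ (b / (a + b))) = a * log p + b * log q := by
  rw [log_mul (by positivity) (by positivity), log_rpow hp, log_rpow hq]
  field_simp

lemma mul_klPt_add_mul_klPt {a b p q m : ℝ} (s : ℝ) (hp : 0 < p) (hq : 0 < q) (hm : 0 < m)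
    (hlog : (a + b) * log m = a * log p + b * log q) :
    a * klPt s p + b * klPt s q = (a + b) * klPt s m + (a * klPt m p + b * klPt m q) := by
  simp only [klPt]
  rw [log_div hm.ne' hp.ne', log_div hm.ne' hq.ne']
  rcases eq_or_ne s 0 with rfl | hs
  · simp only [zero_div, log_zero, zero_mul]
    linear_combination -m * hlog
  · rw [log_div hs hp.ne', log_div hs hq.ne', log_div hs hm.ne']
    linear_combination (s - m) * hlog

/-- The unique minimizer over `s ≥ 0` of `s ↦ λ·KL(s|p) + ε·KL(s|z)` is the
weighted geometric mean `z^{ε/(ε+λ)} · p^{λ/(ε+λ)}`. -/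
theorem prox_kl_of_kl (lam ε p z : ℝ) (hlam : 0 < lam) (hε : 0 < ε)
    (hp : 0 < p) (hz : 0 < z) :
    let sstar := z ^ (ε / (ε + lam)) * p ^ (lam / (ε + lam))
    sstar ∈ Set.Ici (0 : ℝ) ∧
    IsMinOn (fun s => lam * klPt s p + ε * klPt s z) (Set.Ici 0) sstar ∧
    ∀ s ∈ Set.Ici (0 : ℝ),
      lam * klPt s p + ε * klPt s z = lam * klPt sstar p + ε * klPt sstar z →
      s = sstar := by
  intro sstar
  have hsstar : 0 < sstar := by positivity
  have hlog : (lam + ε) * log sstar = lam * log p + ε * log z := by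
    have h : (ε + lam) * log sstar = ε * log z + lam * log p :=
      mul_log_rpow_mul_rpow (by positivity) hz hp
    linarith
  have hsplit (s : ℝ) := mul_klPt_add_mul_klPt s hp hz hsstar hlog
  refine ⟨hsstar.le, isMinOn_iff.mpr fun s hs => ?_, fun s hs heq => ?_⟩
  · simp only [hsplit s, le_add_iff_nonneg_left]
    exact mul_nonneg (by positivity) (klPt_nonneg hs hsstar)
  · rw [hsplit s, add_eq_right, mul_eq_zero] at heq
    exact (klPt_eq_zero_iff hs hsstar).mp (heq.resolve_left (by positivity))
end

section
/- Let (E, d) be the set of positive functions in L^∞(X) with bounded logarithm, endowed with the Thompson part metric d(r,s) = max{ log M(r/s), log M(s/r) } where M(r/s) = inf{ α ≥ 0 : r ≤ α s }. If T : E → E is an order-preserving map that is positively z-homogeneous for some z with |z| < 1 (i.e., T(αx) = α^z T(x) for α > 0), then T is a |z|-Lipschitz contraction for d. -/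
/-- The cone of positive bounded functions with bounded logarithm. -/
def thompsonCone (X : Type*) : Set (X → ℝ) :=
  {r | (∀ x, 0 < r x) ∧ ∃ C : ℝ, ∀ x, |Real.log (r x)| ≤ C}

/-- `M(r/s) = inf{α ≥ 0 : r ≤ α s}`. -/
noncomputable def thompsonM {X : Type*} (r s : X → ℝ) : ℝ :=
  sInf {α : ℝ | 0 ≤ α ∧ ∀ x, r x ≤ α * s x}

/-- The Thompson part metric `d(r,s) = max{log M(r/s), log M(s/r)}`. -/
noncomputable def thompsonDist {X : Type*} (r s : X → ℝ) : ℝ :=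
  max (Real.log (thompsonM r s)) (Real.log (thompsonM s r))

/-!
If `r ≤ m s` with `m = M(r/s)`, monotonicity and homogeneity give `T r ≤ m ^ z T s`, so
`log M(Tr/Ts) ≤ z log M(r/s)`, and symmetrically. Since `M(r/s) M(s/r) ≥ 1`, the two logarithms
have nonnegative sum, so each has absolute value at most `d(r,s)`; hence `z` times either is at
most `|z| d(r,s)`.
-/

open Real

section

variable {X : Type*} {r s : X → ℝ}

lemma exists_le_mul_of_mem_thompsonCone (hr : r ∈ thompsonCone X) (hs : s ∈ thompsonCone X) :
    ∃ α, 0 ≤ α ∧ ∀ x, r x ≤ α * s x := by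
  obtain ⟨hrpos, Cr, hCr⟩ := hr
  obtain ⟨hspos, Cs, hCs⟩ := hs
  refine ⟨exp (Cr + Cs), (exp_pos _).le, fun x => ?_⟩
  have hr_le : log (r x) ≤ Cr := (abs_le.1 (hCr x)).2
  have hs_ge : -Cs ≤ log (s x) := (abs_le.1 (hCs x)).1
  calc r x = exp (log (r x)) := (exp_log (hrpos x)).symm
    _ ≤ exp (Cr + Cs) * exp (log (s x)) := by
        rw [← exp_add]; exact exp_le_exp.2 (by linarith)
    _ = exp (Cr + Cs) * s x := by rw [exp_log (hspos x)]

lemma smul_mem_thompsonCone (hs : s ∈ thompsonCone X) {m : ℝ} (hm : 0 < m) :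
    (fun x => m * s x) ∈ thompsonCone X := by
  obtain ⟨hpos, C, hC⟩ := hs
  refine ⟨fun x => mul_pos hm (hpos x), |log m| + C, fun x => ?_⟩
  rw [log_mul hm.ne' (hpos x).ne']
  exact (abs_add_le _ _).trans (by linarith [hC x])

lemma thompsonM_le {α : ℝ} (hα : 0 ≤ α) (h : ∀ x, r x ≤ α * s x) : thompsonM r s ≤ α :=
  csInf_le ⟨0, fun _ hβ => hβ.1⟩ ⟨hα, h⟩

lemma div_le_thompsonM (hne : ∃ α, 0 ≤ α ∧ ∀ x, r x ≤ α * s x) (x : X) (hs : 0 < s x) :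
    r x / s x ≤ thompsonM r s :=
  le_csInf hne fun _ hα => (div_le_iff₀ hs).2 (hα.2 x)

lemma le_thompsonM_mul (hr : r ∈ thompsonCone X) (hs : s ∈ thompsonCone X) (x : X) :
    r x ≤ thompsonM r s * s x :=
  (div_le_iff₀ (hs.1 x)).1 (div_le_thompsonM (exists_le_mul_of_mem_thompsonCone hr hs) x (hs.1 x))

lemma thompsonM_pos [Nonempty X] (hr : r ∈ thompsonCone X) (hs : s ∈ thompsonCone X) :
    0 < thompsonM r s :=
  let x := Classical.arbitrary X
  (div_pos (hr.1 x) (hs.1 x)).trans_le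
    (div_le_thompsonM (exists_le_mul_of_mem_thompsonCone hr hs) x (hs.1 x))

lemma thompsonM_of_isEmpty [IsEmpty X] (r s : X → ℝ) : thompsonM r s = 0 := by
  have : {α : ℝ | 0 ≤ α ∧ ∀ x, r x ≤ α * s x} = Set.Ici 0 := by
    ext α; simp
  rw [thompsonM, this, csInf_Ici]

lemma zero_le_log_thompsonM_add [Nonempty X] (hr : r ∈ thompsonCone X)
    (hs : s ∈ thompsonCone X) : 0 ≤ log (thompsonM r s) + log (thompsonM s r) := by
  let x := Classical.arbitrary X
  have hrs := div_le_thompsonM (exists_le_mul_of_mem_thompsonCone hr hs) x (hs.1 x)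
  have hsr := div_le_thompsonM (exists_le_mul_of_mem_thompsonCone hs hr) x (hr.1 x)
  have hprod : 1 ≤ thompsonM r s * thompsonM s r := by
    calc (1 : ℝ) = r x / s x * (s x / r x) := by
          field_simp [(hr.1 x).ne', (hs.1 x).ne']
      _ ≤ thompsonM r s * thompsonM s r :=
          mul_le_mul hrs hsr (div_pos (hs.1 x) (hr.1 x)).le (thompsonM_pos hr hs).le
  rw [← log_mul (thompsonM_pos hr hs).ne' (thompsonM_pos hs hr).ne']
  exact log_nonneg hprod

section Homogeneous

variable {T : (X → ℝ) → (X → ℝ)} {z : ℝ}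
  (hmono : ∀ r ∈ thompsonCone X, ∀ s ∈ thompsonCone X,
    (∀ x, r x ≤ s x) → ∀ x, T r x ≤ T s x)
  (hhom : ∀ α : ℝ, 0 < α → ∀ r ∈ thompsonCone X,
    T (fun x => α * r x) = fun x => α ^ z * T r x)
include hmono hhom

lemma thompsonM_map_le_rpow [Nonempty X] (hr : r ∈ thompsonCone X) (hs : s ∈ thompsonCone X) :
    thompsonM (T r) (T s) ≤ thompsonM r s ^ z := by
  have hm := thompsonM_pos hr hs
  refine thompsonM_le (rpow_nonneg hm.le z) fun x => ?_
  have hle := hmono r hr _ (smul_mem_thompsonCone hs hm) (le_thompsonM_mul hr hs) x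
  rwa [hhom _ hm s hs] at hle

lemma log_thompsonM_map_le [Nonempty X] (hmaps : ∀ r ∈ thompsonCone X, T r ∈ thompsonCone X)
    (hr : r ∈ thompsonCone X) (hs : s ∈ thompsonCone X) :
    log (thompsonM (T r) (T s)) ≤ z * log (thompsonM r s) := by
  rw [← log_rpow (thompsonM_pos hr hs)]
  exact log_le_log (thompsonM_pos (hmaps r hr) (hmaps s hs))
    (thompsonM_map_le_rpow hmono hhom hr hs)

end Homogeneous

lemma max_le_abs_mul_max {a b a' b' z : ℝ} (hab : 0 ≤ a + b) (ha : a' ≤ z * a)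
    (hb : b' ≤ z * b) : max a' b' ≤ |z| * max a b := by
  have hbound : ∀ c, |c| ≤ max a b → z * c ≤ |z| * max a b := fun c hc =>
    calc z * c ≤ |z| * |c| := (le_abs_self _).trans (abs_mul z c).le
      _ ≤ |z| * max a b := mul_le_mul_of_nonneg_left hc (abs_nonneg z)
  refine max_le (ha.trans (hbound a ?_)) (hb.trans (hbound b ?_))
  · exact abs_le.2 ⟨by linarith [le_max_right a b], le_max_left a b⟩
  · exact abs_le.2 ⟨by linarith [le_max_left a b], le_max_right a b⟩

end

theorem thompson_contraction_general {X : Type*} (T : (X → ℝ) → (X → ℝ)) (z : ℝ)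
    (hmaps : ∀ r ∈ thompsonCone X, T r ∈ thompsonCone X)
    (hmono : ∀ r ∈ thompsonCone X, ∀ s ∈ thompsonCone X,
      (∀ x, r x ≤ s x) → ∀ x, T r x ≤ T s x)
    (hhom : ∀ α : ℝ, 0 < α → ∀ r ∈ thompsonCone X,
      T (fun x => α * r x) = fun x => α ^ z * T r x) :
    ∀ r ∈ thompsonCone X, ∀ s ∈ thompsonCone X,
      thompsonDist (T r) (T s) ≤ |z| * thompsonDist r s := by
  intro r hr s hs
  rcases isEmpty_or_nonempty X with hX | hX
  · simp [thompsonDist, thompsonM_of_isEmpty]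
  · exact max_le_abs_mul_max (zero_le_log_thompsonM_add hr hs)
      (log_thompsonM_map_le hmono hhom hmaps hr hs) (log_thompsonM_map_le hmono hhom hmaps hs hr)

/-- An order-preserving positively `z`-homogeneous map with `|z| < 1` on the cone of
positive functions with bounded logarithm is a `|z|`-Lipschitz contraction for the
Thompson part metric. -/
theorem thompson_contraction {X : Type*} (T : (X → ℝ) → (X → ℝ)) (z : ℝ)
    (hz : |z| < 1)
    (hmaps : ∀ r ∈ thompsonCone X, T r ∈ thompsonCone X)
    (hmono : ∀ r ∈ thompsonCone X, ∀ s ∈ thompsonCone X,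
      (∀ x, r x ≤ s x) → ∀ x, T r x ≤ T s x)
    (hhom : ∀ α : ℝ, 0 < α → ∀ r ∈ thompsonCone X,
      T (fun x => α * r x) = fun x => α ^ z * T r x) :
    ∀ r ∈ thompsonCone X, ∀ s ∈ thompsonCone X,
      thompsonDist (T r) (T s) ≤ |z| * thompsonDist r s :=
  thompson_contraction_general T z hmaps hmono hhom
end

section
/- Let φ be an entropy function with conjugate φ* and recession slope φ'_∞. For nonnegative reals u, v, the convex conjugate of the perspective divergence (s,h) ↦ D_φ(s|h) (jointly in both variables) is the indicator function of the set B_φ = { (a,b) ∈ ℝ² : b ≤ −φ*(a) }. -/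
open Filter

/-- Perspective divergence `D_φ(s|h)`: `h·φ(s/h)` for `h > 0`, `s·φ'_∞` for `h = 0`
(convention `0·∞ = 0`), and `+∞` off the nonnegative quadrant. -/
noncomputable def perspDivFull (φ : ℝ → EReal) (φinf : EReal) (s h : ℝ) : EReal :=
  if 0 ≤ s ∧ 0 ≤ h then
    (if 0 < h then (h : EReal) * φ (s / h) else (s : EReal) * φinf)
  else ⊤

/-- Legendre conjugate of `φ`. -/
noncomputable def eConj (φ : ℝ → EReal) (a : ℝ) : EReal :=
  ⨆ s : ℝ, (((a * s : ℝ) : EReal) - φ s)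

/-
`b ≤ -φ*(a)` says exactly that the affine function `x ↦ a x + b` lies below `φ`.
Then `a ≤ φ'_∞`, and scaling the minorant by `h` bounds `D_φ(s|h)` from below by `a s + b h`,
so the supremum is attained at `(0, 0)` and equals `0`. Otherwise `a s₀ + b > φ(s₀)` for some
`s₀ ≥ 0`, and along the ray `(t s₀, t)` the objective grows like `t (a s₀ + b - φ(s₀)) → ∞`.
-/

lemma EReal.coe_sub_le_neg_coe_iff (x b : ℝ) (y : EReal) :
    (x : EReal) - y ≤ -b ↔ ((x + b : ℝ) : EReal) ≤ y := by
  induction y using EReal.rec with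
  | bot => simp
  | coe y => norm_cast; constructor <;> intro h <;> linarith
  | top => simp

lemma EReal.exists_lt_coe_mul_sub_mul {y : EReal} {r : ℝ} (hy : y < r) (M : ℝ) :
    ∃ t : ℝ, 0 < t ∧ (M : EReal) < ((t * r : ℝ) : EReal) - t * y := by
  obtain ⟨q, hyq, hqr⟩ := EReal.lt_iff_exists_real_btwn.mp hy
  have hε : 0 < r - q := _root_.sub_pos.mpr (EReal.coe_lt_coe_iff.mp hqr)
  set t := (|M| + 1) / (r - q)
  have ht : 0 < t := by positivity
  refine ⟨t, ht, ?_⟩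
  calc (M : EReal) < ((t * r - t * q : ℝ) : EReal) := by
        have : t * r - t * q = |M| + 1 := by
          rw [← mul_sub, div_mul_cancel₀ _ hε.ne']
        rw [this]; exact_mod_cast (le_abs_self M).trans_lt (lt_add_one _)
    _ = ((t * r : ℝ) : EReal) - t * q := by rw [EReal.coe_sub, EReal.coe_mul t q]
    _ ≤ ((t * r : ℝ) : EReal) - t * y :=
        EReal.sub_le_sub le_rfl (mul_le_mul_of_nonneg_left hyq.le (by exact_mod_cast ht.le))

lemma le_neg_eConj_iff (φ : ℝ → EReal) (a b : ℝ) :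
    (b : EReal) ≤ -eConj φ a ↔ ∀ x, ((a * x + b : ℝ) : EReal) ≤ φ x := by
  simp only [EReal.le_neg, eConj, iSup_le_iff, EReal.coe_sub_le_neg_coe_iff]

lemma coe_le_of_tendsto_div_of_affine_le {φ : ℝ → EReal} {φinf : EReal} {a b : ℝ}
    (hφinf : Tendsto (fun x : ℝ => φ x / (x : EReal)) atTop (nhds φinf))
    (hφ : ∀ x, ((a * x + b : ℝ) : EReal) ≤ φ x) : (a : EReal) ≤ φinf := by
  have hslope : Tendsto (fun x : ℝ => ((a + b / x : ℝ) : EReal)) atTop (nhds (a : EReal)) := by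
    rw [EReal.tendsto_coe]
    simpa using (tendsto_const_nhds (x := a)).add
      ((tendsto_const_nhds (x := b)).div_atTop tendsto_id)
  refine le_of_tendsto_of_tendsto hslope hφinf ?_
  filter_upwards [eventually_gt_atTop (0 : ℝ)] with x hx
  have hdiv : ((a + b / x : ℝ) : EReal) = ((a * x + b : ℝ) : EReal) / (x : EReal) := by
    rw [← EReal.coe_div]; congr 1; field_simp
  rw [hdiv]
  exact EReal.div_le_div_right_of_nonneg (by exact_mod_cast hx.le) (hφ x)

lemma perspDivFull_zero_zero (φ : ℝ → EReal) (φinf : EReal) : perspDivFull φ φinf 0 0 = 0 := by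
  simp [perspDivFull]

lemma perspDivFull_mul_self (φ : ℝ → EReal) (φinf : EReal) {s t : ℝ} (hs : 0 ≤ s) (ht : 0 < t) :
    perspDivFull φ φinf (t * s) t = t * φ s := by
  rw [perspDivFull, if_pos ⟨by positivity, ht.le⟩, if_pos ht, mul_div_cancel_left₀ _ ht.ne']

lemma coe_add_le_perspDivFull {φ : ℝ → EReal} {φinf : EReal} {a b : ℝ}
    (hφ : ∀ x, ((a * x + b : ℝ) : EReal) ≤ φ x) (hinf : (a : EReal) ≤ φinf) (s h : ℝ) :
    ((a * s + b * h : ℝ) : EReal) ≤ perspDivFull φ φinf s h := by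
  unfold perspDivFull
  split_ifs with hq hh
  · calc ((a * s + b * h : ℝ) : EReal) = ((h * (a * (s / h) + b) : ℝ) : EReal) := by
          congr 1; field_simp
      _ = h * ((a * (s / h) + b : ℝ) : EReal) := EReal.coe_mul _ _
      _ ≤ h * φ (s / h) := mul_le_mul_of_nonneg_left (hφ _) (by exact_mod_cast hh.le)
  · obtain rfl : h = 0 := le_antisymm (not_lt.mp hh) hq.2
    calc ((a * s + b * 0 : ℝ) : EReal) = s * a := by rw [mul_zero, add_zero, mul_comm]; rfl
      _ ≤ s * φinf := mul_le_mul_of_nonneg_left hinf (by exact_mod_cast hq.1)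
  · exact le_top

noncomputable def perspConj (φ : ℝ → EReal) (φinf : EReal) (a b : ℝ) : EReal :=
  ⨆ s : ℝ, ⨆ h : ℝ, (((a * s + b * h : ℝ) : EReal) - perspDivFull φ φinf s h)

section perspConj

variable (φ : ℝ → EReal) (φinf : EReal) (a b : ℝ)

lemma le_perspConj (s h : ℝ) :
    ((a * s + b * h : ℝ) : EReal) - perspDivFull φ φinf s h ≤ perspConj φ φinf a b :=
  le_iSup₂ (f := fun s h => ((a * s + b * h : ℝ) : EReal) - perspDivFull φ φinf s h) s h

lemma perspConj_nonneg : 0 ≤ perspConj φ φinf a b := by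
  simpa [perspDivFull_zero_zero] using le_perspConj φ φinf a b 0 0

variable {φ φinf a b}

lemma perspConj_eq_zero (hφinf : Tendsto (fun x : ℝ => φ x / (x : EReal)) atTop (nhds φinf))
    (hb : (b : EReal) ≤ -eConj φ a) : perspConj φ φinf a b = 0 := by
  have hφ := (le_neg_eConj_iff φ a b).mp hb
  have hinf := coe_le_of_tendsto_div_of_affine_le hφinf hφ
  refine le_antisymm (iSup₂_le fun s h => ?_) (perspConj_nonneg φ φinf a b)
  rw [EReal.sub_le_iff_le_add (by simp) (by simp), zero_add]
  exact coe_add_le_perspDivFull hφ hinf s h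

lemma perspConj_eq_top (hdom_neg : ∀ s : ℝ, s < 0 → φ s = ⊤)
    (hb : ¬ (b : EReal) ≤ -eConj φ a) : perspConj φ φinf a b = ⊤ := by
  obtain ⟨s₀, hs₀⟩ : ∃ s₀, φ s₀ < ((a * s₀ + b : ℝ) : EReal) := by
    simpa [le_neg_eConj_iff] using hb
  have hs₀_nonneg : 0 ≤ s₀ := by
    by_contra hneg
    simp [hdom_neg s₀ (not_le.mp hneg)] at hs₀
  refine (EReal.eq_top_iff_forall_lt _).mpr fun M => ?_
  obtain ⟨t, ht, hM⟩ := EReal.exists_lt_coe_mul_sub_mul hs₀ M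
  calc (M : EReal) < ((t * (a * s₀ + b) : ℝ) : EReal) - t * φ s₀ := hM
    _ = ((a * (t * s₀) + b * t : ℝ) : EReal) - perspDivFull φ φinf (t * s₀) t := by
        rw [perspDivFull_mul_self φ φinf hs₀_nonneg ht]; congr 2; ring
    _ ≤ perspConj φ φinf a b := le_perspConj φ φinf a b _ _

end perspConj

theorem perspDiv_conjugate_indicator_general (φ : ℝ → EReal) (φinf : EReal)
    (hdom_neg : ∀ s : ℝ, s < 0 → φ s = ⊤)
    (hφinf : Tendsto (fun x : ℝ => φ x / (x : EReal)) atTop (nhds φinf)) :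
    ∀ a b : ℝ,
      ((b : EReal) ≤ -eConj φ a →
        (⨆ s : ℝ, ⨆ h : ℝ, (((a * s + b * h : ℝ) : EReal) - perspDivFull φ φinf s h))
          = 0) ∧
      (¬ ((b : EReal) ≤ -eConj φ a) →
        (⨆ s : ℝ, ⨆ h : ℝ, (((a * s + b * h : ℝ) : EReal) - perspDivFull φ φinf s h))
          = ⊤) :=
  fun _ _ => ⟨perspConj_eq_zero hφinf, perspConj_eq_top hdom_neg⟩

/-- The convex conjugate of the joint perspective divergence `(s,h) ↦ D_φ(s|h)` is the
indicator of the set `B_φ = {(a,b) : b ≤ −φ*(a)}`. -/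
theorem perspDiv_conjugate_indicator (φ : ℝ → EReal) (φinf : EReal)
    (hconv : ∀ a b t : ℝ, 0 ≤ t → t ≤ 1 →
      φ (t * a + (1 - t) * b) ≤ (t : EReal) * φ a + ((1 - t : ℝ) : EReal) * φ b)
    (hlsc : LowerSemicontinuous φ)
    (hdom_neg : ∀ s : ℝ, s < 0 → φ s = ⊤)
    (hdom_pos : ∃ s : ℝ, 0 < s ∧ φ s ≠ ⊤)
    (hφinf : Tendsto (fun x : ℝ => φ x / (x : EReal)) atTop (nhds φinf)) :
    ∀ a b : ℝ,
      ((b : EReal) ≤ -eConj φ a →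
        (⨆ s : ℝ, ⨆ h : ℝ, (((a * s + b * h : ℝ) : EReal) - perspDivFull φ φinf s h))
          = 0) ∧
      (¬ ((b : EReal) ≤ -eConj φ a) →
        (⨆ s : ℝ, ⨆ h : ℝ, (((a * s + b * h : ℝ) : EReal) - perspDivFull φ φinf s h))
          = ⊤) :=
  perspDiv_conjugate_indicator_general φ φinf hdom_neg hφinf
end
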